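/- Let H and K be real separable Hilbert spaces, m ≥ 0, and let G satisfy Assumption (G') with U = H, Z = K. Suppose F_0 : H × ℝ × K → ℝ is (a) sequentially continuous when K is endowed with its weak topology, (b) Lipschitz in the last two variables uniformly in the first: |F_0(x,y₁,z₁) − F_0(x,y₂,z₂)| ≤ L(|y₁−y₂| + |z₁−z₂|_K) for some L > 0, and (c) of polynomial growth: |F_0(x,y,z)| ≤ L'(1+|x|^m+|y|+|z|_K) for some L' > 0. Suppose (P_s)_{s≥0} is a one-parameter semigroup of continuous linear operators on C_m(H) such that: (d) (s,x) ↦ P_s[φ](x) is Borel measurable on [0,∞)×H for every φ ∈ C_m(H); (e) there exist C > 0 and a ∈ ℝ with |P_s[φ](x)| ≤ C e^{as}|φ|_{C_m}(1+|x|^m) for all s ≥ 0, x ∈ H, φ ∈ C_m(H); (f) P_s(C_m(H)) ⊆ G^{1,G}_m(H) for every s > 0; (g) (s,x) ↦ ∇^G P_s[φ](x) is measurable on (0,∞)×H for every φ ∈ C_m(H); (h) there exist a_G ∈ ℝ and a function γ_G : (0,∞) → [0,∞), locally integrable on [0,∞) and bounded in a neighborhood of +∞, with |∇^G P_s[φ](x)|_K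 ≤ γ_G(s)e^{a_G s}|φ|_{C_m}(1+|x|^m) for all s > 0, x ∈ H, φ ∈ C_m(H). Then there exists λ₀ ∈ ℝ such that for every λ > λ₀ there exists a unique v ∈ G^{1,G}_m(H) satisfying v(x) = ∫_0^∞ e^{−λs} P_s[F_0(·, v(·), ∇^G v(·))](x) ds for every x ∈ H. -/

import Mathlib

open Filter MeasureTheory Set
open scoped RealInnerProductSpace ENNReal

/-- A family `x ↦ G(x)` of closed densely defined (possibly unbounded) linear operators
from `K` to `H` with common domain and range, and minimal-norm pseudoinverses. -/
structure GFamily (K H : Type*)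
    [NormedAddCommGroup K] [InnerProductSpace ℝ K]
    [NormedAddCommGroup H] [InnerProductSpace ℝ H] where
  /-- the common domain `D_G ⊆ K` -/
  dom : Submodule ℝ K
  /-- the operator `G(x) : D_G → H` -/
  op : H → dom →ₗ[ℝ] H
  dense_dom : Dense (dom : Set K)
  closed_graph : ∀ x : H, IsClosed {p : K × H | ∃ h : p.1 ∈ dom, op x ⟨p.1, h⟩ = p.2}
  /-- the common range `R_G ⊆ H` -/
  ran : Set H
  range_eq : ∀ x : H, Set.range (op x) = ran
  /-- the pseudoinverse `G(x)⁻¹ : R_G → D_G` (junk values off `R_G`) -/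
  pinv : H → H → K
  pinv_mem_dom : ∀ x : H, ∀ y ∈ ran, pinv x y ∈ dom
  pinv_apply : ∀ (x : H) (y : H) (hy : y ∈ ran), op x ⟨pinv x y, pinv_mem_dom x y hy⟩ = y
  pinv_minimal : ∀ x : H, ∀ y ∈ ran, ∀ z : dom, op x z = y → ‖pinv x y‖ ≤ ‖(z : K)‖

/-- Assumption (G'): for every `y ∈ R_G`, the map `x ↦ G(x)⁻¹ y` is continuous. -/
def GFamily.ContinuousPinv {K H : Type*}
    [NormedAddCommGroup K] [InnerProductSpace ℝ K]
    [NormedAddCommGroup H] [InnerProductSpace ℝ H] (G : GFamily K H) : Prop :=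
  ∀ y ∈ G.ran, Continuous fun x : H => G.pinv x y

variable {K H : Type*}
    [NormedAddCommGroup K] [InnerProductSpace ℝ K]
    [NormedAddCommGroup H] [InnerProductSpace ℝ H]

/-- `f : H → ℝ` is `G`-Gateaux differentiable at `x` with `G`-gradient `p ∈ K`
(the derivative identified with an element of `K` via Riesz):
for every `z ∈ D_G`, `(f(x + s G(x) z) − f(x))/s → ⟪p, z⟫` as `s → 0`. -/
def HasGGradientAt (G : GFamily K H) (f : H → ℝ) (p : K) (x : H) : Prop :=
  ∀ z : G.dom, Tendsto (fun s : ℝ => s⁻¹ * (f (x + s • G.op x z) - f x))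
    (nhdsWithin (0 : ℝ) {0}ᶜ) (nhds ⟪p, (z : K)⟫)

/-- `f : H → ℝ` is `G`-Fréchet differentiable at `x` with `G`-gradient `p ∈ K`:
`G`-Gateaux differentiable with the limit uniform for `z` in the unit ball of `K`
intersected with `D_G`. -/
def HasGFrechetGradientAt (G : GFamily K H) (f : H → ℝ) (p : K) (x : H) : Prop :=
  HasGGradientAt G f p x ∧
  ∀ ε : ℝ, 0 < ε → ∃ δ : ℝ, 0 < δ ∧ ∀ s : ℝ, s ≠ 0 → |s| < δ →
    ∀ z : G.dom, ‖(z : K)‖ ≤ 1 →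
      |s⁻¹ * (f (x + s • G.op x z) - f x) - ⟪p, (z : K)⟫| ≤ ε

/-- `φ ∈ C_m(H)`. -/
def MemCm (m : ℝ) (φ : H → ℝ) : Prop :=
  Continuous φ ∧ ∃ C : ℝ, ∀ x : H, |φ x| ≤ C * (1 + ‖x‖ ^ m)

/-- `φ ∈ B_m(H)`. -/
def MemBm {H : Type*} [NormedAddCommGroup H] [MeasurableSpace H]
    (m : ℝ) (φ : H → ℝ) : Prop :=
  Measurable φ ∧ ∃ C : ℝ, ∀ x : H, |φ x| ≤ C * (1 + ‖x‖ ^ m)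

/-- The `C_m`- (or `B_m`-) norm `|φ|_{C_m} = sup_x |φ(x)|/(1+‖x‖^m)`. -/
noncomputable def cmNorm (m : ℝ) (φ : H → ℝ) : ℝ :=
  ⨆ x : H, |φ x| / (1 + ‖x‖ ^ m)

/-- `f ∈ G^{1,G}_m(H)` with (everywhere defined) `G`-gradient `Df : H → K`:
`f ∈ C_m(H)`, `f` is `G`-Gateaux differentiable on `H`, `∇^G f` is strongly continuous
and has at most polynomial growth of order `m`. -/
def MemG1Gm (G : GFamily K H) (m : ℝ) (f : H → ℝ) (Df : H → K) : Prop :=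
  MemCm m f ∧ (∀ x : H, HasGGradientAt G f (Df x) x) ∧
  (∀ k : K, Continuous fun x : H => ⟪Df x, k⟫) ∧
  ∃ C : ℝ, ∀ x : H, ‖Df x‖ ≤ C * (1 + ‖x‖ ^ m)

/-- `f ∈ C^{1,G}_m(H)` with (everywhere defined) `G`-gradient `Df : H → K`:
`f ∈ C_m(H)`, `f` is `G`-Fréchet differentiable on `H`, `D^G f` is continuous
and has at most polynomial growth of order `m`. -/
def MemC1Gm (G : GFamily K H) (m : ℝ) (f : H → ℝ) (Df : H → K) : Prop :=
  MemCm m f ∧ (∀ x : H, HasGFrechetGradientAt G f (Df x) x) ∧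
  Continuous Df ∧ ∃ C : ℝ, ∀ x : H, ‖Df x‖ ≤ C * (1 + ‖x‖ ^ m)


/-!
The mild formulation is a fixed point problem for the map sending a pair `(v, Dv)` to
`(R ψ, ∇^G R ψ)`, where `ψ = F₀(·, v, Dv)` and `R ψ = ∫_0^∞ e^{-λ s} P_s ψ ds`. Measured in the
weighted distance `sup_x |·| / (1 + |x|^m)`, the Lipschitz bound on `F₀` together with (e) and (h)
makes this map contract by the factor `2 L ∫_0^∞ e^{-λ s} (C e^{a s} + γ_G(s) e^{a_G s}) ds`, which
tends to `0` as `λ → ∞`. That `R ψ` is `G`-differentiable with gradient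
`∫_0^∞ e^{-λ s} ∇^G P_s ψ ds` follows by differentiating under the integral sign; the difference
quotients along `G(x) z` are dominated by the mean value inequality on the line `x + t G(x) z`,
whose derivative is read off through the pseudoinverse `G(x + t G(x) z)⁻¹`, continuous in `t` by
Assumption (G').
-/

open Topology

theorem one_add_rpow_norm_pos {E : Type*} [SeminormedAddCommGroup E] (m : ℝ) (x : E) :
    0 < 1 + ‖x‖ ^ m := by
  positivity

theorem continuous_one_add_rpow_norm {E : Type*} [SeminormedAddCommGroup E] {m : ℝ} (hm : 0 ≤ m) :
    Continuous fun x : E => 1 + ‖x‖ ^ m :=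
  continuous_const.add (continuous_norm.rpow_const fun _ => Or.inr hm)

omit [InnerProductSpace ℝ H] in
theorem cmNorm_nonneg (m : ℝ) (φ : H → ℝ) : 0 ≤ cmNorm m φ :=
  Real.iSup_nonneg fun x => div_nonneg (abs_nonneg _) (one_add_rpow_norm_pos m x).le

omit [InnerProductSpace ℝ H] in
theorem cmNorm_le {m N : ℝ} {φ : H → ℝ} (h : ∀ x, |φ x| ≤ N * (1 + ‖x‖ ^ m)) :
    cmNorm m φ ≤ N := by
  have hN : 0 ≤ N := nonneg_of_mul_nonneg_left ((abs_nonneg _).trans (h 0))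
    (one_add_rpow_norm_pos m (0 : H))
  exact Real.iSup_le (fun x => (div_le_iff₀ (one_add_rpow_norm_pos m x)).2 (h x)) hN

omit [InnerProductSpace ℝ H] in
theorem MemCm.sub {m : ℝ} {φ ψ : H → ℝ} (hφ : MemCm m φ) (hψ : MemCm m ψ) :
    MemCm m fun y => φ y - ψ y := by
  obtain ⟨hφc, A, hA⟩ := hφ
  obtain ⟨hψc, B, hB⟩ := hψ
  refine ⟨hφc.sub hψc, A + B, fun x => ?_⟩
  calc |φ x - ψ x| ≤ |φ x| + |ψ x| := abs_sub _ _
    _ ≤ (A + B) * (1 + ‖x‖ ^ m) := by linarith [hA x, hB x]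

namespace HasGGradientAt

variable {G : GFamily K H} {f g : H → ℝ} {p q : K} {x : H}

theorem unique (hp : HasGGradientAt G f p x) (hq : HasGGradientAt G f q x) : p = q := by
  have hdom : EqOn (fun k : K => ⟪p, k⟫) (fun k => ⟪q, k⟫) G.dom := fun k hk =>
    tendsto_nhds_unique (hp ⟨k, hk⟩) (hq ⟨k, hk⟩)
  have h := Continuous.ext_on G.dense_dom (continuous_const.inner continuous_id)
    (continuous_const.inner continuous_id) hdom
  exact ext_inner_right ℝ fun k => congrFun h k

theorem add (hf : HasGGradientAt G f p x) (hg : HasGGradientAt G g q x) :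
    HasGGradientAt G (fun y => f y + g y) (p + q) x := by
  intro z
  rw [inner_add_left]
  refine ((hf z).add (hg z)).congr fun s => ?_
  ring

/-- `G(x + t y)⁻¹ y` is a `G(x + t y)`-preimage of `y`. -/
theorem hasDerivAt_line {y : H} {t : ℝ} (hf : HasGGradientAt G f p (x + t • y)) (hy : y ∈ G.ran) :
    HasDerivAt (fun r : ℝ => f (x + r • y)) ⟪p, G.pinv (x + t • y) y⟫ t := by
  rw [hasDerivAt_iff_tendsto_slope_zero]
  have h := hf ⟨G.pinv (x + t • y) y, G.pinv_mem_dom _ y hy⟩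
  simp only [G.pinv_apply _ y hy] at h
  refine h.congr fun s => ?_
  rw [smul_eq_mul, add_smul, add_assoc]

end HasGGradientAt

theorem abs_sub_le_of_hasGGradientAt {G : GFamily K H} {f : H → ℝ} {Df : H → K}
    (hf : ∀ z, HasGGradientAt G f (Df z) z) {x y : H} (hy : y ∈ G.ran) {c : ℝ}
    (hc : ∀ t ∈ Icc (-1 : ℝ) 1, ‖Df (x + t • y)‖ * ‖G.pinv (x + t • y) y‖ ≤ c)
    {u : ℝ} (hu : u ∈ Icc (-1 : ℝ) 1) :
    |f (x + u • y) - f x| ≤ c * |u| := by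
  have h := (convex_Icc (-1 : ℝ) 1).norm_image_sub_le_of_norm_hasDerivWithin_le
    (f := fun r : ℝ => f (x + r • y)) (x := 0) (y := u)
    (fun t _ => ((hf _).hasDerivAt_line hy).hasDerivWithinAt)
    (fun t ht => (norm_inner_le_norm _ _).trans (hc t ht)) (by norm_num) hu
  simpa using h

section WeightedContraction

variable {X E : Type*} [MetricSpace E]

def WeightedContractingOn (w : X → ℝ) (S : Set (X → E)) (Φ : (X → E) → X → E) (c : ℝ) : Prop :=
  ∀ f ∈ S, ∀ g ∈ S, ∀ M : ℝ, (∀ x, dist (f x) (g x) ≤ M * w x) →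
    ∀ x, dist (Φ f x) (Φ g x) ≤ c * M * w x

variable {w : X → ℝ} {S : Set (X → E)} {Φ : (X → E) → X → E} {c : ℝ}

theorem WeightedContractingOn.dist_iterate_le (hΦ : WeightedContractingOn w S Φ c)
    (hmaps : MapsTo Φ S S) {f g : X → E} (hf : f ∈ S) (hg : g ∈ S) {M : ℝ}
    (hM : ∀ x, dist (f x) (g x) ≤ M * w x) (n : ℕ) (x : X) :
    dist (Φ^[n] f x) (Φ^[n] g x) ≤ c ^ n * M * w x := by
  induction n generalizing f g M with
  | zero => simpa using hM x
  | succ n ih =>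
    simp only [Function.iterate_succ_apply]
    calc dist (Φ^[n] (Φ f) x) (Φ^[n] (Φ g) x) ≤ c ^ n * (c * M) * w x :=
          ih (hmaps hf) (hmaps hg) (hΦ f hf g hg M hM)
      _ = c ^ (n + 1) * M * w x := by ring

theorem WeightedContractingOn.eq_of_isFixedPt (hΦ : WeightedContractingOn w S Φ c)
    (hmaps : MapsTo Φ S S) (hc0 : 0 ≤ c) (hc1 : c < 1) {f g : X → E} (hf : f ∈ S) (hg : g ∈ S)
    (hfix : Function.IsFixedPt Φ f) (hgix : Function.IsFixedPt Φ g) {M : ℝ}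
    (hM : ∀ x, dist (f x) (g x) ≤ M * w x) :
    f = g := by
  funext x
  have hlim : Tendsto (fun n : ℕ => c ^ n * M * w x) atTop (𝓝 0) := by
    simpa [mul_assoc] using (tendsto_pow_atTop_nhds_zero_of_lt_one hc0 hc1).mul_const (M * w x)
  refine dist_le_zero.1 (ge_of_tendsto' hlim fun n => ?_)
  simpa [(hfix.iterate n).eq, (hgix.iterate n).eq] using
    hΦ.dist_iterate_le hmaps hf hg hM n x

/-- The Picard iterates converge pointwise at a weighted geometric rate, so `S` only needs to be
closed under weighted uniform limits. -/
theorem WeightedContractingOn.exists_isFixedPt [CompleteSpace E]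
    (hΦ : WeightedContractingOn w S Φ c) (hmaps : MapsTo Φ S S) (hc0 : 0 ≤ c) (hc1 : c < 1)
    (hw : ∀ x, 0 ≤ w x)
    (hS : ∀ (u : ℕ → X → E) (f : X → E), (∀ n, u n ∈ S) →
      (∀ ε > 0, ∀ᶠ n in atTop, ∀ x, dist (u n x) (f x) ≤ ε * w x) → f ∈ S)
    {f₀ : X → E} (hf₀ : f₀ ∈ S) {M₀ : ℝ} (hM₀ : ∀ x, dist (f₀ x) (Φ f₀ x) ≤ M₀ * w x) :
    ∃ f ∈ S, Function.IsFixedPt Φ f := by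
  set u : ℕ → X → E := fun n => Φ^[n] f₀
  have hstep (x : X) (n : ℕ) : dist (u n x) (u (n + 1) x) ≤ M₀ * w x * c ^ n := by
    have h := hΦ.dist_iterate_le hmaps hf₀ (hmaps hf₀) hM₀ n x
    rw [← Function.iterate_succ_apply] at h
    linarith
  choose f hf using fun x =>
    cauchySeq_tendsto_of_complete (cauchySeq_of_le_geometric c _ hc1 (hstep x))
  set r : ℕ → ℝ := fun n => M₀ * c ^ n / (1 - c)
  have hr : Tendsto r atTop (𝓝 0) := by
    simpa [r] using ((tendsto_pow_atTop_nhds_zero_of_lt_one hc0 hc1).const_mul M₀).div_const (1 - c)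
  have htail (n : ℕ) (x : X) : dist (u n x) (f x) ≤ r n * w x := by
    have h := dist_le_of_le_geometric_of_tendsto c _ hc1 (hstep x) (hf x) n
    rw [show r n * w x = M₀ * w x * c ^ n / (1 - c) by simp only [r]; ring]
    exact h
  have hfS : f ∈ S := by
    refine hS u f (fun n => hmaps.iterate n hf₀) fun ε hε => ?_
    filter_upwards [hr.eventually (eventually_le_nhds hε)] with n hn x
    exact (htail n x).trans (mul_le_mul_of_nonneg_right hn (hw x))
  refine ⟨f, hfS, funext fun x => tendsto_nhds_unique ?_ ((hf x).comp (tendsto_add_atTop_nat 1))⟩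
  have hlim : Tendsto (fun n => c * r n * w x) atTop (𝓝 0) := by
    simpa using (hr.const_mul c).mul_const (w x)
  refine tendsto_iff_dist_tendsto_zero.2 (squeeze_zero (fun _ => dist_nonneg) (fun n => ?_) hlim)
  simpa [u, Function.iterate_succ_apply'] using
    hΦ (u n) (hmaps.iterate n hf₀) f hfS (r n) (htail n) x

end WeightedContraction

theorem continuous_of_eventually_dist_le_mul {X E : Type*} [TopologicalSpace X]
    [PseudoMetricSpace E] {w : X → ℝ} (hw : Continuous w) {u : ℕ → X → E} {f : X → E}
    (hu : ∀ n, Continuous (u n))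
    (h : ∀ ε > 0, ∀ᶠ n in atTop, ∀ x, dist (u n x) (f x) ≤ ε * w x) :
    Continuous f := by
  refine TendstoLocallyUniformly.continuous ?_ (Eventually.of_forall (f := atTop) hu).frequently
  refine Metric.tendstoLocallyUniformly_iff.2 fun ε hε x₀ => ?_
  have hδ : 0 < ε / (2 * (|w x₀| + 1)) := by positivity
  refine ⟨{x | w x < w x₀ + 1}, hw.continuousAt.eventually_lt continuousAt_const (by simp), ?_⟩
  filter_upwards [h _ hδ] with n hn x hx
  rw [dist_comm]
  calc dist (u n x) (f x) ≤ ε / (2 * (|w x₀| + 1)) * w x := hn x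
    _ ≤ ε / (2 * (|w x₀| + 1)) * (|w x₀| + 1) := by
        gcongr
        exact hx.le.trans (by linarith [le_abs_self (w x₀)])
    _ = ε / 2 := by field_simp
    _ < ε := half_lt_self hε

section Laplace

variable {E : Type*} [NormedAddCommGroup E] [NormedSpace ℝ E]

noncomputable def laplace (F : ℝ → E) (lam : ℝ) : E :=
  ∫ s in Ioi (0 : ℝ), Real.exp (-lam * s) • F s

def LaplaceIntegrable (F : ℝ → E) (lam : ℝ) : Prop :=
  IntegrableOn (fun s => Real.exp (-lam * s) • F s) (Ioi 0)

variable {F F' : ℝ → E} {g : ℝ → ℝ} {lam : ℝ}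

theorem LaplaceIntegrable.sub (hF : LaplaceIntegrable F lam) (hF' : LaplaceIntegrable F' lam) :
    LaplaceIntegrable (fun s => F s - F' s) lam := by
  unfold LaplaceIntegrable
  simp only [smul_sub]
  exact Integrable.sub hF hF'

theorem LaplaceIntegrable.add (hF : LaplaceIntegrable F lam) (hF' : LaplaceIntegrable F' lam) :
    LaplaceIntegrable (fun s => F s + F' s) lam := by
  unfold LaplaceIntegrable
  simp only [smul_add]
  exact Integrable.add hF hF'

theorem LaplaceIntegrable.const_smul (hF : LaplaceIntegrable F lam) (c : ℝ) :
    LaplaceIntegrable (fun s => c • F s) lam := by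
  exact (hF.smul c).congr (Eventually.of_forall fun s => smul_comm c _ _)

theorem LaplaceIntegrable.mul_const {g : ℝ → ℝ} (hg : LaplaceIntegrable g lam) (c : ℝ) :
    LaplaceIntegrable (fun s => g s * c) lam := by
  unfold LaplaceIntegrable
  simp only [smul_eq_mul, ← mul_assoc]
  exact Integrable.mul_const hg c

theorem LaplaceIntegrable.mono (hg : LaplaceIntegrable g lam)
    (hF : AEStronglyMeasurable F (volume.restrict (Ioi 0))) (hFg : ∀ s > 0, ‖F s‖ ≤ g s) :
    LaplaceIntegrable F lam := by
  refine Integrable.mono' hg.norm (by fun_prop) ?_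
  filter_upwards [ae_restrict_mem measurableSet_Ioi] with s hs
  rw [norm_smul, norm_smul]
  exact mul_le_mul_of_nonneg_left ((hFg s hs).trans (le_abs_self _)) (norm_nonneg _)

theorem LaplaceIntegrable.aestronglyMeasurable_exp_smul (hF : LaplaceIntegrable F lam)
    (lam' : ℝ) :
    AEStronglyMeasurable (fun s => Real.exp (-lam' * s) • F s) (volume.restrict (Ioi 0)) := by
  have h : (fun s => Real.exp (-lam' * s) • F s) =
      fun s => Real.exp ((lam - lam') * s) • (Real.exp (-lam * s) • F s) := by
    funext s
    rw [smul_smul, ← Real.exp_add]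
    ring_nf
  rw [h]
  exact (by fun_prop : Continuous fun s => Real.exp ((lam - lam') * s)).aestronglyMeasurable.smul
    hF.aestronglyMeasurable

theorem norm_exp_neg_mul_smul_le {x : E} {s : ℝ} (hs : 0 < s) {lam' : ℝ} (h : lam ≤ lam') :
    ‖Real.exp (-lam' * s) • x‖ ≤ ‖Real.exp (-lam * s) • x‖ := by
  rw [norm_smul, norm_smul]
  gcongr
  simp only [Real.norm_eq_abs, Real.abs_exp, Real.exp_le_exp]
  nlinarith

theorem norm_laplace_le (hg : LaplaceIntegrable g lam) (hFg : ∀ s > 0, ‖F s‖ ≤ g s) :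
    ‖laplace F lam‖ ≤ laplace g lam := by
  refine norm_integral_le_of_norm_le hg ?_
  filter_upwards [ae_restrict_mem measurableSet_Ioi] with s hs
  rw [norm_smul, smul_eq_mul, Real.norm_eq_abs, Real.abs_exp]
  exact mul_le_mul_of_nonneg_left (hFg s hs) (Real.exp_nonneg _)

theorem laplace_nonneg (hg : ∀ s > 0, 0 ≤ g s) : 0 ≤ laplace g lam :=
  setIntegral_nonneg measurableSet_Ioi fun s hs => mul_nonneg (Real.exp_nonneg _) (hg s hs)

theorem laplace_sub (hF : LaplaceIntegrable F lam) (hF' : LaplaceIntegrable F' lam) :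
    laplace (fun s => F s - F' s) lam = laplace F lam - laplace F' lam := by
  simp only [laplace, smul_sub]
  exact integral_sub hF hF'

theorem laplace_congr (h : ∀ s > 0, F s = F' s) : laplace F lam = laplace F' lam :=
  setIntegral_congr_fun measurableSet_Ioi fun s hs => by simp only [h s hs]

theorem laplace_const_smul (c : ℝ) : laplace (fun s => c • F s) lam = c • laplace F lam := by
  simp only [laplace, smul_comm _ c]
  exact integral_smul c _

theorem laplace_mul_const (c : ℝ) : laplace (fun s => g s * c) lam = laplace g lam * c := by
  simp only [laplace, smul_eq_mul, ← mul_assoc]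
  exact integral_mul_const c _

theorem inner_laplace {K : Type*} [NormedAddCommGroup K] [InnerProductSpace ℝ K] [CompleteSpace K]
    {F : ℝ → K} (hF : LaplaceIntegrable F lam) (k : K) :
    ⟪laplace F lam, k⟫ = laplace (fun s => ⟪F s, k⟫) lam := by
  rw [laplace, laplace, real_inner_comm, ← integral_inner hF k]
  simp only [inner_smul_right, real_inner_comm k, smul_eq_mul]

theorem laplace_eq_integral_Ici (F : ℝ → ℝ) (lam : ℝ) :
    laplace F lam = ∫ s in Ici (0 : ℝ), Real.exp (-lam * s) * F s := by
  rw [integral_Ici_eq_integral_Ioi]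
  rfl

theorem tendsto_laplace_atTop (hF : LaplaceIntegrable F lam) :
    Tendsto (laplace F) atTop (𝓝 0) := by
  have h := tendsto_integral_filter_of_dominated_convergence (μ := volume.restrict (Ioi 0))
    (l := atTop) (F := fun lam' s => Real.exp (-lam' * s) • F s) (f := fun _ => 0)
    (fun s => ‖Real.exp (-lam * s) • F s‖) (Eventually.of_forall hF.aestronglyMeasurable_exp_smul)
    ?_ hF.norm ?_
  · rwa [integral_zero] at h
  · filter_upwards [eventually_ge_atTop lam] with lam' hlam'
    filter_upwards [ae_restrict_mem measurableSet_Ioi] with s hs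
    exact norm_exp_neg_mul_smul_le hs hlam'
  · filter_upwards [ae_restrict_mem measurableSet_Ioi] with s hs
    have hexp : Tendsto (fun lam' : ℝ => Real.exp (-lam' * s)) atTop (𝓝 0) :=
      Real.tendsto_exp_atBot.comp (tendsto_neg_atTop_atBot.atBot_mul_const hs)
    simpa using hexp.smul_const (F s)

theorem laplaceIntegrable_mul_exp {γ : ℝ → ℝ} (hγ0 : ∀ s, 0 ≤ γ s)
    (hloc : ∀ T, IntegrableOn γ (Icc 0 T)) (hbdd : ∃ R M, ∀ s, R ≤ s → γ s ≤ M) {b : ℝ}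
    (h : b < lam) :
    LaplaceIntegrable (fun s => γ s * Real.exp (b * s)) lam := by
  obtain ⟨R, M, hRM⟩ := hbdd
  have hR : 0 ≤ max R 0 := le_max_right _ _
  have hγ : AEStronglyMeasurable γ (volume.restrict (Ioi 0)) := by
    have hlocOn : LocallyIntegrableOn γ (Ici 0) := fun x _ =>
      ⟨Icc 0 (x + 1), Ici_inter_Iic (a := (0 : ℝ)) ▸
        inter_mem_nhdsWithin (Ici 0) (Iic_mem_nhds (lt_add_one x)), hloc (x + 1)⟩
    exact hlocOn.aestronglyMeasurable.mono_measure
      (Measure.restrict_mono Ioi_subset_Ici_self le_rfl)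
  have hexp : (fun s => Real.exp (-lam * s) • (γ s * Real.exp (b * s))) =
      fun s => γ s * Real.exp (-(lam - b) * s) := by
    funext s
    rw [smul_eq_mul, mul_left_comm, ← Real.exp_add]
    ring_nf
  unfold LaplaceIntegrable
  rw [hexp, ← Ioc_union_Ioi_eq_Ioi hR]
  refine IntegrableOn.union ?_ ?_
  · refine Integrable.mul_bdd (c := 1) ((hloc _).mono_set Ioc_subset_Icc_self)
      (by fun_prop : Continuous fun s => Real.exp (-(lam - b) * s)).aestronglyMeasurable ?_
    filter_upwards [ae_restrict_mem measurableSet_Ioc] with s hs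
    rw [Real.norm_eq_abs, Real.abs_exp, Real.exp_le_one_iff]
    nlinarith [hs.1]
  · refine Integrable.bdd_mul (c := M) (exp_neg_integrableOn_Ioi _ (sub_pos.2 h))
      (hγ.mono_measure (Measure.restrict_mono (Ioi_subset_Ioi hR) le_rfl)) ?_
    filter_upwards [ae_restrict_mem measurableSet_Ioi] with s hs
    rw [Real.norm_eq_abs, abs_of_nonneg (hγ0 s)]
    exact hRM s ((le_max_left R 0).trans hs.out.le)

theorem continuous_laplace {X : Type*} [TopologicalSpace X] [FirstCountableTopology X]
    {F : X → ℝ → E} {B : X → ℝ} (hB : Continuous B) (hg : LaplaceIntegrable g lam)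
    (hF : ∀ x, AEStronglyMeasurable (F x) (volume.restrict (Ioi 0)))
    (hFg : ∀ x, ∀ s > 0, ‖F x s‖ ≤ g s * B x) (hcont : ∀ s > 0, Continuous fun x => F x s) :
    Continuous fun x => laplace (F x) lam := by
  refine continuous_iff_continuousAt.2 fun x₀ =>
    continuousAt_of_dominated ?_ ?_ (hg.norm.mul_const (|B x₀| + 1)) ?_
  · exact Eventually.of_forall fun x =>
      (by fun_prop : Continuous fun s => Real.exp (-lam * s)).aestronglyMeasurable.smul (hF x)
  · filter_upwards [hB.abs.continuousAt.eventually_lt continuousAt_const (lt_add_one |B x₀|)]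
      with x hx
    filter_upwards [ae_restrict_mem measurableSet_Ioi] with s hs
    rw [norm_smul, norm_smul, mul_assoc]
    gcongr
    calc ‖F x s‖ ≤ g s * B x := hFg x s hs
      _ ≤ ‖g s‖ * |B x| := by rw [Real.norm_eq_abs, ← abs_mul]; exact le_abs_self _
      _ ≤ ‖g s‖ * (|B x₀| + 1) := by gcongr
  · filter_upwards [ae_restrict_mem measurableSet_Ioi] with s hs
    exact ((hcont s hs).const_smul _).continuousAt

end Laplace

/-- By Assumption (G'), `t ↦ G(x + t y)⁻¹ y` is continuous, hence bounded on `[-1, 1]`. -/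
theorem exists_abs_sub_le_of_hasGGradientAt {G : GFamily K H} (hG : G.ContinuousPinv)
    {f : ℝ → H → ℝ} {Df : ℝ → H → K} {g : ℝ → ℝ} {B : H → ℝ} (hB : Continuous B)
    (hgrad : ∀ s > 0, ∀ y, HasGGradientAt G (f s) (Df s y) y)
    (hDf : ∀ s > 0, ∀ y, ‖Df s y‖ ≤ g s * B y) (x : H) {y : H} (hy : y ∈ G.ran) :
    ∃ c, ∀ s > 0, ∀ u ∈ Icc (-1 : ℝ) 1, |f s (x + u • y) - f s x| ≤ ‖g s‖ * c * |u| := by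
  obtain ⟨c, hc⟩ := (isCompact_Icc (a := (-1 : ℝ)) (b := 1)).exists_bound_of_continuousOn
    (f := fun t : ℝ => B (x + t • y) * ‖G.pinv (x + t • y) y‖)
    (Continuous.continuousOn (by have := hG y hy; fun_prop))
  refine ⟨c, fun s hs u hu => abs_sub_le_of_hasGGradientAt (hgrad s hs) hy (fun t ht => ?_) hu⟩
  calc ‖Df s (x + t • y)‖ * ‖G.pinv (x + t • y) y‖
      ≤ ‖g s‖ * (|B (x + t • y)| * ‖G.pinv (x + t • y) y‖) := by
        rw [← mul_assoc]
        gcongr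
        rw [Real.norm_eq_abs, ← abs_mul]
        exact (hDf s hs _).trans (le_abs_self _)
    _ ≤ ‖g s‖ * c := by
        gcongr
        simpa [abs_mul] using hc t ht

theorem hasGGradientAt_laplace [CompleteSpace K] {G : GFamily K H} (hG : G.ContinuousPinv)
    {f : ℝ → H → ℝ} {Df : ℝ → H → K} {g : ℝ → ℝ} {B : H → ℝ} {lam : ℝ} (hB : Continuous B)
    (hg : LaplaceIntegrable g lam)
    (hgrad : ∀ s > 0, ∀ y, HasGGradientAt G (f s) (Df s y) y)
    (hDf : ∀ s > 0, ∀ y, ‖Df s y‖ ≤ g s * B y)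
    (hf : ∀ y, LaplaceIntegrable (fun s => f s y) lam) {x : H}
    (hDfx : LaplaceIntegrable (fun s => Df s x) lam) :
    HasGGradientAt G (fun y => laplace (fun s => f s y) lam) (laplace (fun s => Df s x) lam) x := by
  intro z
  set y := G.op x z
  obtain ⟨c, hquot⟩ := exists_abs_sub_le_of_hasGGradientAt hG hB hgrad hDf x
    (G.range_eq x ▸ Set.mem_range_self z : y ∈ G.ran)
  have hrepr (u : ℝ) : u⁻¹ * (laplace (fun s => f s (x + u • y)) lam - laplace (fun s => f s x) lam)
      = laplace (fun s => u⁻¹ * (f s (x + u • y) - f s x)) lam := by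
    rw [← laplace_sub (hf _) (hf _)]
    exact (laplace_const_smul u⁻¹).symm
  simp only [hrepr, inner_laplace hDfx]
  refine tendsto_integral_filter_of_dominated_convergence
    (fun s => ‖Real.exp (-lam * s) • g s‖ * c) ?_ ?_ (hg.norm.mul_const c) ?_
  · exact Eventually.of_forall fun u => (((hf _).sub (hf _)).const_smul u⁻¹).aestronglyMeasurable
  · have hu : ∀ᶠ u in 𝓝[≠] (0 : ℝ), u ∈ Icc (-1 : ℝ) 1 :=
      mem_nhdsWithin_of_mem_nhds (Icc_mem_nhds (by norm_num) (by norm_num))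
    filter_upwards [hu, self_mem_nhdsWithin] with u hu hu0
    filter_upwards [ae_restrict_mem measurableSet_Ioi] with s hs
    rw [norm_smul, norm_smul, norm_mul, norm_inv, Real.norm_eq_abs u,
      Real.norm_eq_abs (f s _ - _), mul_assoc]
    refine mul_le_mul_of_nonneg_left ?_ (norm_nonneg _)
    rw [inv_mul_le_iff₀ (abs_pos.2 hu0)]
    linarith [hquot s hs u hu]
  · filter_upwards [ae_restrict_mem measurableSet_Ioi] with s hs
    exact (hgrad s hs x z).const_smul _

theorem dist_fst_le_dist {α β : Type*} [PseudoMetricSpace α] [PseudoMetricSpace β]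
    (p q : α × β) : dist p.1 q.1 ≤ dist p q := by
  rw [Prod.dist_eq]
  exact le_max_left _ _

theorem dist_snd_le_dist {α β : Type*} [PseudoMetricSpace α] [PseudoMetricSpace β]
    (p q : α × β) : dist p.2 q.2 ≤ dist p q := by
  rw [Prod.dist_eq]
  exact le_max_right _ _

def MemCmWeak (m : ℝ) (f : H → ℝ × K) : Prop :=
  Continuous (fun x => (f x).1) ∧ (∀ k : K, Continuous fun x => ⟪(f x).2, k⟫) ∧
    ∃ N, ∀ x, ‖f x‖ ≤ N * (1 + ‖x‖ ^ m)

theorem MemG1Gm.memCmWeak {G : GFamily K H} {m : ℝ} {v : H → ℝ} {Dv : H → K}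
    (h : MemG1Gm G m v Dv) : MemCmWeak m fun x => (v x, Dv x) := by
  obtain ⟨⟨hvc, A, hA⟩, -, hDvc, B, hB⟩ := h
  refine ⟨hvc, hDvc, max A B, fun x => norm_prod_le_iff.2 ⟨(hA x).trans ?_, (hB x).trans ?_⟩⟩ <;>
  gcongr
  exacts [le_max_left _ _, le_max_right _ _]

omit [InnerProductSpace ℝ H] in
theorem MemCmWeak.exists_dist_le {m : ℝ} {f g : H → ℝ × K} (hf : MemCmWeak m f)
    (hg : MemCmWeak m g) : ∃ M, ∀ x, dist (f x) (g x) ≤ M * (1 + ‖x‖ ^ m) := by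
  obtain ⟨-, -, A, hA⟩ := hf
  obtain ⟨-, -, B, hB⟩ := hg
  refine ⟨A + B, fun x => (dist_le_norm_add_norm _ _).trans ?_⟩
  rw [add_mul]
  exact add_le_add (hA x) (hB x)

omit [InnerProductSpace ℝ H] in
theorem memCmWeak_of_tendsto {m : ℝ} (hm : 0 ≤ m) {u : ℕ → H → ℝ × K} {f : H → ℝ × K}
    (hu : ∀ n, MemCmWeak m (u n))
    (h : ∀ ε > 0, ∀ᶠ n in atTop, ∀ x, dist (u n x) (f x) ≤ ε * (1 + ‖x‖ ^ m)) :
    MemCmWeak m f := by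
  have hw := continuous_one_add_rpow_norm (E := H) hm
  refine ⟨?_, fun k => ?_, ?_⟩
  · refine continuous_of_eventually_dist_le_mul hw (fun n => (hu n).1) fun ε hε => ?_
    filter_upwards [h ε hε] with n hn x
    exact (dist_fst_le_dist _ _).trans (hn x)
  · refine continuous_of_eventually_dist_le_mul hw (fun n => (hu n).2.1 k) fun ε hε => ?_
    have hεk : ε / (‖k‖ + 1) * ‖k‖ ≤ ε := by
      rw [div_mul_eq_mul_div, div_le_iff₀ (by positivity)]
      nlinarith [norm_nonneg k]
    filter_upwards [h (ε / (‖k‖ + 1)) (by positivity)] with n hn x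
    calc dist ⟪(u n x).2, k⟫ ⟪(f x).2, k⟫ = |⟪(u n x).2 - (f x).2, k⟫| := by
          rw [Real.dist_eq, inner_sub_left]
      _ ≤ dist (u n x).2 (f x).2 * ‖k‖ := by
          rw [dist_eq_norm]
          exact abs_real_inner_le_norm _ _
      _ ≤ ε / (‖k‖ + 1) * (1 + ‖x‖ ^ m) * ‖k‖ := by
          gcongr
          exact (dist_snd_le_dist _ _).trans (hn x)
      _ ≤ ε * (1 + ‖x‖ ^ m) := by
          rw [mul_right_comm]
          gcongr
  · obtain ⟨n, hn⟩ := (h 1 one_pos).exists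
    obtain ⟨-, -, N, hN⟩ := hu n
    refine ⟨N + 1, fun x => ?_⟩
    have h := norm_sub_norm_le (f x) (u n x)
    rw [← dist_eq_norm, dist_comm] at h
    linarith [hN x, hn x]

def nemytskii (F₀ : H → ℝ → K → ℝ) (f : H → ℝ × K) (x : H) : ℝ := F₀ x (f x).1 (f x).2

omit [InnerProductSpace ℝ H] in
theorem memCm_nemytskii {m L' : ℝ} {F₀ : H → ℝ → K → ℝ}
    (hF₀cont : ∀ (xs : ℕ → H) (ys : ℕ → ℝ) (zs : ℕ → K) (x : H) (y : ℝ) (z : K),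
      Tendsto xs atTop (𝓝 x) → Tendsto ys atTop (𝓝 y) →
      (∀ k : K, Tendsto (fun n => ⟪zs n, k⟫) atTop (𝓝 ⟪z, k⟫)) →
      Tendsto (fun n => F₀ (xs n) (ys n) (zs n)) atTop (𝓝 (F₀ x y z)))
    (hL' : 0 ≤ L')
    (hF₀gr : ∀ (x : H) (y : ℝ) (z : K), |F₀ x y z| ≤ L' * (1 + ‖x‖ ^ m + |y| + ‖z‖))
    {f : H → ℝ × K} (hf : MemCmWeak m f) : MemCm m (nemytskii F₀ f) := by
  obtain ⟨hfc, hfw, N, hN⟩ := hf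
  refine ⟨continuous_iff_seqContinuous.2 fun xs x hxs => hF₀cont _ _ _ _ _ _ hxs
    ((hfc.tendsto x).comp hxs) fun k => ((hfw k).tendsto x).comp hxs, L' * (1 + 2 * N),
    fun x => (hF₀gr _ _ _).trans ?_⟩
  have h1 := (norm_fst_le (f x)).trans (hN x)
  have h2 := (norm_snd_le (f x)).trans (hN x)
  rw [Real.norm_eq_abs] at h1
  rw [mul_assoc]
  gcongr
  linarith

omit [InnerProductSpace ℝ K] [NormedAddCommGroup H] [InnerProductSpace ℝ H] in
theorem abs_nemytskii_sub_le {L : ℝ} {F₀ : H → ℝ → K → ℝ} (hL : 0 ≤ L)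
    (hF₀lip : ∀ (x : H) (y₁ y₂ : ℝ) (z₁ z₂ : K),
      |F₀ x y₁ z₁ - F₀ x y₂ z₂| ≤ L * (|y₁ - y₂| + ‖z₁ - z₂‖))
    (f g : H → ℝ × K) (x : H) :
    |nemytskii F₀ f x - nemytskii F₀ g x| ≤ 2 * L * dist (f x) (g x) := by
  have h1 := dist_fst_le_dist (f x) (g x)
  have h2 := dist_snd_le_dist (f x) (g x)
  rw [Real.dist_eq] at h1
  rw [dist_eq_norm] at h2
  refine (hF₀lip _ _ _ _ _).trans ?_
  nlinarith

/-- The mild formulation acts on pairs `f x = (v x, Dv x)`, with `Dv` standing for `∇^G v`. -/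
noncomputable def mildMap (P : ℝ → (H → ℝ) → H → ℝ) (DP : ℝ → (H → ℝ) → H → K)
    (F₀ : H → ℝ → K → ℝ) (lam : ℝ) (f : H → ℝ × K) (x : H) : ℝ × K :=
  (laplace (fun s => P s (nemytskii F₀ f) x) lam, laplace (fun s => DP s (nemytskii F₀ f) x) lam)

/-- The bounds (e) and (h) are merged into the single kernel `κ`; only `s > 0` matters, the mild
formulation being an integral over `(0, ∞)`. -/
structure SmoothingFamily (G : GFamily K H) (m : ℝ) (P : ℝ → (H → ℝ) → H → ℝ)
    (DP : ℝ → (H → ℝ) → H → K) (κ : ℝ → ℝ) : Prop where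
  add : ∀ s > 0, ∀ φ ψ, MemCm m φ → MemCm m ψ →
    ∀ x, P s (fun y => φ y + ψ y) x = P s φ x + P s ψ x
  memG1Gm : ∀ s > 0, ∀ φ, MemCm m φ → MemG1Gm G m (P s φ) (DP s φ)
  aestronglyMeasurable : ∀ φ, MemCm m φ → ∀ x,
    AEStronglyMeasurable (fun s => P s φ x) (volume.restrict (Ioi 0))
  aestronglyMeasurable_grad : ∀ φ, MemCm m φ → ∀ x,
    AEStronglyMeasurable (fun s => DP s φ x) (volume.restrict (Ioi 0))
  kernel_nonneg : ∀ s, 0 ≤ κ s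
  abs_le : ∀ s > 0, ∀ φ, MemCm m φ → ∀ x, |P s φ x| ≤ κ s * (cmNorm m φ * (1 + ‖x‖ ^ m))
  norm_grad_le : ∀ s > 0, ∀ φ, MemCm m φ → ∀ x, ‖DP s φ x‖ ≤ κ s * (cmNorm m φ * (1 + ‖x‖ ^ m))

namespace SmoothingFamily

variable {G : GFamily K H} {m : ℝ} {P : ℝ → (H → ℝ) → H → ℝ} {DP : ℝ → (H → ℝ) → H → K}
  {κ : ℝ → ℝ} {lam : ℝ} {φ ψ : H → ℝ}

theorem laplaceIntegrable (hP : SmoothingFamily G m P DP κ) (hκ : LaplaceIntegrable κ lam)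
    (hφ : MemCm m φ) (x : H) : LaplaceIntegrable (fun s => P s φ x) lam :=
  (hκ.mul_const _).mono (hP.aestronglyMeasurable φ hφ x) fun s hs =>
    (Real.norm_eq_abs _).trans_le (hP.abs_le s hs φ hφ x)

theorem laplaceIntegrable_grad (hP : SmoothingFamily G m P DP κ) (hκ : LaplaceIntegrable κ lam)
    (hφ : MemCm m φ) (x : H) : LaplaceIntegrable (fun s => DP s φ x) lam :=
  (hκ.mul_const _).mono (hP.aestronglyMeasurable_grad φ hφ x) fun s hs =>
    hP.norm_grad_le s hs φ hφ x

theorem abs_laplace_le (hP : SmoothingFamily G m P DP κ) (hκ : LaplaceIntegrable κ lam)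
    (hφ : MemCm m φ) (x : H) :
    |laplace (fun s => P s φ x) lam| ≤ laplace κ lam * (cmNorm m φ * (1 + ‖x‖ ^ m)) := by
  rw [← laplace_mul_const]
  exact norm_laplace_le (hκ.mul_const _) fun s hs =>
    (Real.norm_eq_abs _).trans_le (hP.abs_le s hs φ hφ x)

theorem norm_laplace_grad_le (hP : SmoothingFamily G m P DP κ) (hκ : LaplaceIntegrable κ lam)
    (hφ : MemCm m φ) (x : H) :
    ‖laplace (fun s => DP s φ x) lam‖ ≤ laplace κ lam * (cmNorm m φ * (1 + ‖x‖ ^ m)) := by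
  rw [← laplace_mul_const]
  exact norm_laplace_le (hκ.mul_const _) fun s hs => hP.norm_grad_le s hs φ hφ x

theorem map_sub (hP : SmoothingFamily G m P DP κ) (hφ : MemCm m φ) (hψ : MemCm m ψ) {s : ℝ}
    (hs : 0 < s) (x : H) : P s (fun y => φ y - ψ y) x = P s φ x - P s ψ x := by
  have h := hP.add s hs _ ψ (hφ.sub hψ) hψ x
  simp only [sub_add_cancel] at h
  linarith

/-- `∇^G P_s` is additive because `P_s` is and `G`-gradients are unique. -/
theorem grad_map_sub (hP : SmoothingFamily G m P DP κ) (hφ : MemCm m φ) (hψ : MemCm m ψ) {s : ℝ}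
    (hs : 0 < s) (x : H) : DP s (fun y => φ y - ψ y) x = DP s φ x - DP s ψ x := by
  have h := ((hP.memG1Gm s hs _ (hφ.sub hψ)).2.1 x).add ((hP.memG1Gm s hs ψ hψ).2.1 x)
  have hP_eq : (fun y => P s (fun y => φ y - ψ y) y + P s ψ y) = P s φ := by
    funext y
    rw [hP.map_sub hφ hψ hs]
    ring
  rw [hP_eq] at h
  exact eq_sub_of_add_eq ((hP.memG1Gm s hs φ hφ).2.1 x |>.unique h).symm

theorem laplace_sub_laplace (hP : SmoothingFamily G m P DP κ) (hκ : LaplaceIntegrable κ lam)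
    (hφ : MemCm m φ) (hψ : MemCm m ψ) (x : H) :
    laplace (fun s => P s φ x) lam - laplace (fun s => P s ψ x) lam =
      laplace (fun s => P s (fun y => φ y - ψ y) x) lam := by
  rw [← _root_.laplace_sub (hP.laplaceIntegrable hκ hφ x) (hP.laplaceIntegrable hκ hψ x)]
  exact laplace_congr fun s hs => (hP.map_sub hφ hψ hs x).symm

theorem laplace_grad_sub_laplace_grad (hP : SmoothingFamily G m P DP κ)
    (hκ : LaplaceIntegrable κ lam) (hφ : MemCm m φ) (hψ : MemCm m ψ) (x : H) :
    laplace (fun s => DP s φ x) lam - laplace (fun s => DP s ψ x) lam =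
      laplace (fun s => DP s (fun y => φ y - ψ y) x) lam := by
  rw [← _root_.laplace_sub (hP.laplaceIntegrable_grad hκ hφ x)
    (hP.laplaceIntegrable_grad hκ hψ x)]
  exact laplace_congr fun s hs => (hP.grad_map_sub hφ hψ hs x).symm

theorem continuous_laplace (hP : SmoothingFamily G m P DP κ) (hm : 0 ≤ m)
    (hκ : LaplaceIntegrable κ lam) (hφ : MemCm m φ) :
    Continuous fun x => laplace (fun s => P s φ x) lam :=
  _root_.continuous_laplace (continuous_const.mul (continuous_one_add_rpow_norm hm)) hκ
    (hP.aestronglyMeasurable φ hφ)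
    (fun x s hs => (Real.norm_eq_abs _).trans_le (hP.abs_le s hs φ hφ x))
    fun s hs => (hP.memG1Gm s hs φ hφ).1.1

theorem continuous_inner_laplace_grad [CompleteSpace K] (hP : SmoothingFamily G m P DP κ)
    (hm : 0 ≤ m) (hκ : LaplaceIntegrable κ lam) (hφ : MemCm m φ) (k : K) :
    Continuous fun x => ⟪laplace (fun s => DP s φ x) lam, k⟫ := by
  simp only [inner_laplace (hP.laplaceIntegrable_grad hκ hφ _)]
  refine _root_.continuous_laplace (B := fun x => cmNorm m φ * (1 + ‖x‖ ^ m) * ‖k‖)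
    ((continuous_const.mul (continuous_one_add_rpow_norm hm)).mul continuous_const) hκ
    (fun x => (hP.aestronglyMeasurable_grad φ hφ x).inner aestronglyMeasurable_const)
    (fun x s hs => ?_) fun s hs => (hP.memG1Gm s hs φ hφ).2.2.1 k
  rw [Real.norm_eq_abs, ← mul_assoc]
  exact (abs_real_inner_le_norm _ _).trans
    (mul_le_mul_of_nonneg_right (hP.norm_grad_le s hs φ hφ x) (norm_nonneg k))

theorem hasGGradientAt_laplace [CompleteSpace K] (hP : SmoothingFamily G m P DP κ) (hm : 0 ≤ m)
    (hG : G.ContinuousPinv) (hκ : LaplaceIntegrable κ lam) (hφ : MemCm m φ) (x : H) :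
    HasGGradientAt G (fun y => laplace (fun s => P s φ y) lam)
      (laplace (fun s => DP s φ x) lam) x :=
  _root_.hasGGradientAt_laplace hG (continuous_const.mul (continuous_one_add_rpow_norm hm)) hκ
    (fun s hs => (hP.memG1Gm s hs φ hφ).2.1) (fun s hs => hP.norm_grad_le s hs φ hφ)
    (hP.laplaceIntegrable hκ hφ) (hP.laplaceIntegrable_grad hκ hφ x)

theorem memG1Gm_laplace [CompleteSpace K] (hP : SmoothingFamily G m P DP κ) (hm : 0 ≤ m)
    (hG : G.ContinuousPinv) (hκ : LaplaceIntegrable κ lam) (hφ : MemCm m φ) :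
    MemG1Gm G m (fun x => laplace (fun s => P s φ x) lam)
      (fun x => laplace (fun s => DP s φ x) lam) := by
  refine ⟨⟨hP.continuous_laplace hm hκ hφ, laplace κ lam * cmNorm m φ, fun x => ?_⟩,
    hP.hasGGradientAt_laplace hm hG hκ hφ, hP.continuous_inner_laplace_grad hm hκ hφ,
    laplace κ lam * cmNorm m φ, fun x => ?_⟩
  · rw [mul_assoc]
    exact hP.abs_laplace_le hκ hφ x
  · rw [mul_assoc]
    exact hP.norm_laplace_grad_le hκ hφ x

variable {L L' : ℝ} {F₀ : H → ℝ → K → ℝ}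

theorem weightedContractingOn_mildMap (hP : SmoothingFamily G m P DP κ)
    (hκ : LaplaceIntegrable κ lam)
    (hF₀cont : ∀ (xs : ℕ → H) (ys : ℕ → ℝ) (zs : ℕ → K) (x : H) (y : ℝ) (z : K),
      Tendsto xs atTop (𝓝 x) → Tendsto ys atTop (𝓝 y) →
      (∀ k : K, Tendsto (fun n => ⟪zs n, k⟫) atTop (𝓝 ⟪z, k⟫)) →
      Tendsto (fun n => F₀ (xs n) (ys n) (zs n)) atTop (𝓝 (F₀ x y z)))
    (hL : 0 ≤ L)
    (hF₀lip : ∀ (x : H) (y₁ y₂ : ℝ) (z₁ z₂ : K),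
      |F₀ x y₁ z₁ - F₀ x y₂ z₂| ≤ L * (|y₁ - y₂| + ‖z₁ - z₂‖))
    (hL' : 0 ≤ L')
    (hF₀gr : ∀ (x : H) (y : ℝ) (z : K), |F₀ x y z| ≤ L' * (1 + ‖x‖ ^ m + |y| + ‖z‖)) :
    WeightedContractingOn (fun x : H => 1 + ‖x‖ ^ m) {f | MemCmWeak m f} (mildMap P DP F₀ lam)
      (2 * L * laplace κ lam) := by
  intro f hf g hg M hM x
  have hφ := memCm_nemytskii hF₀cont hL' hF₀gr hf
  have hψ := memCm_nemytskii hF₀cont hL' hF₀gr hg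
  have hδ : cmNorm m (fun y => nemytskii F₀ f y - nemytskii F₀ g y) ≤ 2 * L * M :=
    cmNorm_le fun y => (abs_nemytskii_sub_le hL hF₀lip f g y).trans <|
      (mul_le_mul_of_nonneg_left (hM y) (by positivity)).trans_eq (by ring)
  have hI : 0 ≤ laplace κ lam := laplace_nonneg fun s _ => hP.kernel_nonneg s
  have hbound : laplace κ lam * (cmNorm m (fun y => nemytskii F₀ f y - nemytskii F₀ g y) *
      (1 + ‖x‖ ^ m)) ≤ 2 * L * laplace κ lam * M * (1 + ‖x‖ ^ m) :=
    calc _ ≤ laplace κ lam * (2 * L * M * (1 + ‖x‖ ^ m)) := by gcongr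
      _ = _ := by ring
  rw [Prod.dist_eq, Real.dist_eq, dist_eq_norm]
  simp only [mildMap]
  rw [hP.laplace_sub_laplace hκ hφ hψ, hP.laplace_grad_sub_laplace_grad hκ hφ hψ]
  exact max_le ((hP.abs_laplace_le hκ (hφ.sub hψ) x).trans hbound)
    ((hP.norm_laplace_grad_le hκ (hφ.sub hψ) x).trans hbound)

/-- The `Dv`-component of a mild solution is forced by uniqueness of `G`-gradients. -/
theorem isFixedPt_mildMap [CompleteSpace K] (hP : SmoothingFamily G m P DP κ) (hm : 0 ≤ m)
    (hG : G.ContinuousPinv)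
    (hF₀cont : ∀ (xs : ℕ → H) (ys : ℕ → ℝ) (zs : ℕ → K) (x : H) (y : ℝ) (z : K),
      Tendsto xs atTop (𝓝 x) → Tendsto ys atTop (𝓝 y) →
      (∀ k : K, Tendsto (fun n => ⟪zs n, k⟫) atTop (𝓝 ⟪z, k⟫)) →
      Tendsto (fun n => F₀ (xs n) (ys n) (zs n)) atTop (𝓝 (F₀ x y z)))
    (hL' : 0 ≤ L')
    (hF₀gr : ∀ (x : H) (y : ℝ) (z : K), |F₀ x y z| ≤ L' * (1 + ‖x‖ ^ m + |y| + ‖z‖))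
    (hκ : LaplaceIntegrable κ lam) {v : H → ℝ} {Dv : H → K} (hv : MemG1Gm G m v Dv)
    (hveq : ∀ x : H, v x = ∫ s in Ici (0 : ℝ),
      Real.exp (-lam * s) * P s (fun y => F₀ y (v y) (Dv y)) x) :
    Function.IsFixedPt (mildMap P DP F₀ lam) fun x => (v x, Dv x) := by
  have hv_eq : (fun x => laplace (fun s => P s (nemytskii F₀ fun x => (v x, Dv x)) x) lam) = v :=
    funext fun x => (laplace_eq_integral_Ici _ _).trans (hveq x).symm
  have hgrad := hP.hasGGradientAt_laplace hm hG hκ (memCm_nemytskii hF₀cont hL' hF₀gr hv.memCmWeak)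
  rw [hv_eq] at hgrad
  exact funext fun x => Prod.ext (congrFun hv_eq x) ((hv.2.1 x).unique (hgrad x)).symm

theorem existsUnique_mildSolution [CompleteSpace K] (hP : SmoothingFamily G m P DP κ)
    (hm : 0 ≤ m) (hG : G.ContinuousPinv)
    (hF₀cont : ∀ (xs : ℕ → H) (ys : ℕ → ℝ) (zs : ℕ → K) (x : H) (y : ℝ) (z : K),
      Tendsto xs atTop (𝓝 x) → Tendsto ys atTop (𝓝 y) →
      (∀ k : K, Tendsto (fun n => ⟪zs n, k⟫) atTop (𝓝 ⟪z, k⟫)) →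
      Tendsto (fun n => F₀ (xs n) (ys n) (zs n)) atTop (𝓝 (F₀ x y z)))
    (hL : 0 ≤ L)
    (hF₀lip : ∀ (x : H) (y₁ y₂ : ℝ) (z₁ z₂ : K),
      |F₀ x y₁ z₁ - F₀ x y₂ z₂| ≤ L * (|y₁ - y₂| + ‖z₁ - z₂‖))
    (hL' : 0 ≤ L')
    (hF₀gr : ∀ (x : H) (y : ℝ) (z : K), |F₀ x y z| ≤ L' * (1 + ‖x‖ ^ m + |y| + ‖z‖))
    (hκ : LaplaceIntegrable κ lam) (hc : 2 * L * laplace κ lam < 1) :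
    ∃ (v : H → ℝ) (Dv : H → K),
      (MemG1Gm G m v Dv ∧
        ∀ x : H, v x = ∫ s in Ici (0 : ℝ),
          Real.exp (-lam * s) * P s (fun y => F₀ y (v y) (Dv y)) x) ∧
      ∀ (v' : H → ℝ) (Dv' : H → K),
        (MemG1Gm G m v' Dv' ∧
          ∀ x : H, v' x = ∫ s in Ici (0 : ℝ),
            Real.exp (-lam * s) * P s (fun y => F₀ y (v' y) (Dv' y)) x) →
        v' = v := by
  set S : Set (H → ℝ × K) := {f | MemCmWeak m f}
  have hmem {f} (hf : f ∈ S) := memCm_nemytskii hF₀cont hL' hF₀gr hf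
  have hmaps : MapsTo (mildMap P DP F₀ lam) S S := fun f hf =>
    (hP.memG1Gm_laplace hm hG hκ (hmem hf)).memCmWeak
  have hΦ := hP.weightedContractingOn_mildMap hκ hF₀cont hL hF₀lip hL' hF₀gr
  have hc0 : 0 ≤ 2 * L * laplace κ lam :=
    mul_nonneg (by positivity) (laplace_nonneg fun s _ => hP.kernel_nonneg s)
  have h0 : (fun _ => (0, 0) : H → ℝ × K) ∈ S :=
    ⟨continuous_const, fun k => by simpa using continuous_const, 0, fun x => by simp⟩
  obtain ⟨M₀, hM₀⟩ := MemCmWeak.exists_dist_le h0 (hmaps h0)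
  obtain ⟨f, hf, hff⟩ := hΦ.exists_isFixedPt hmaps hc0 hc
    (fun x => (one_add_rpow_norm_pos m x).le) (fun u f hu h => memCmWeak_of_tendsto hm hu h) h0 hM₀
  refine ⟨fun x => (f x).1, fun x => (f x).2, ⟨?_, fun x => ?_⟩, fun v' Dv' ⟨hv', hv'eq⟩ => ?_⟩
  · rw [← hff.eq]
    exact hP.memG1Gm_laplace hm hG hκ (hmem hf)
  · exact (congrArg Prod.fst (congrFun hff x)).symm.trans (laplace_eq_integral_Ici _ _)
  · have hfix' := hP.isFixedPt_mildMap hm hG hF₀cont hL' hF₀gr hκ hv' hv'eq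
    obtain ⟨M, hM⟩ := MemCmWeak.exists_dist_le hv'.memCmWeak hf
    have h := hΦ.eq_of_isFixedPt hmaps hc0 hc hv'.memCmWeak hf hfix' hff hM
    exact funext fun x => congrArg Prod.fst (congrFun h x)

end SmoothingFamily

theorem stmt6_general {H K : Type*}
    [NormedAddCommGroup H] [InnerProductSpace ℝ H] [MeasurableSpace H]
    [NormedAddCommGroup K] [InnerProductSpace ℝ K] [CompleteSpace K]
    [TopologicalSpace.SeparableSpace K] [MeasurableSpace K] [BorelSpace K]
    (m : ℝ) (hm : 0 ≤ m)
    (G : GFamily K H) (hG : G.ContinuousPinv)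
    (F₀ : H → ℝ → K → ℝ)
    -- (a) sequential continuity with the weak topology on K
    (hF₀cont : ∀ (xs : ℕ → H) (ys : ℕ → ℝ) (zs : ℕ → K) (x : H) (y : ℝ) (z : K),
      Tendsto xs atTop (nhds x) → Tendsto ys atTop (nhds y) →
      (∀ k : K, Tendsto (fun n => ⟪zs n, k⟫) atTop (nhds ⟪z, k⟫)) →
      Tendsto (fun n => F₀ (xs n) (ys n) (zs n)) atTop (nhds (F₀ x y z)))
    -- (b) uniform Lipschitz continuity in the last two variables
    (L : ℝ) (hL : 0 < L)
    (hF₀lip : ∀ (x : H) (y₁ y₂ : ℝ) (z₁ z₂ : K),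
      |F₀ x y₁ z₁ - F₀ x y₂ z₂| ≤ L * (|y₁ - y₂| + ‖z₁ - z₂‖))
    -- (c) polynomial growth
    (L' : ℝ) (hL' : 0 < L')
    (hF₀gr : ∀ (x : H) (y : ℝ) (z : K),
      |F₀ x y z| ≤ L' * (1 + ‖x‖ ^ m + |y| + ‖z‖))
    -- the semigroup P on C_m(H)
    (P : ℝ → (H → ℝ) → H → ℝ)
    (hPadd : ∀ s : ℝ, 0 ≤ s → ∀ φ ψ, MemCm m φ → MemCm m ψ →
      ∀ x : H, P s (fun y => φ y + ψ y) x = P s φ x + P s ψ x)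
    -- (d) joint measurability on [0,∞) × H
    (hPmeas : ∀ φ, MemCm m φ → Measurable fun p : Ici (0 : ℝ) × H => P p.1 φ p.2)
    -- (e) growth estimate
    (C : ℝ) (hC : 0 < C) (a : ℝ)
    (hPbd : ∀ s : ℝ, 0 ≤ s → ∀ φ, MemCm m φ → ∀ x : H,
      |P s φ x| ≤ C * Real.exp (a * s) * cmNorm m φ * (1 + ‖x‖ ^ m))
    -- (f) G-smoothing: P_s maps C_m(H) into G^{1,G}_m(H), with G-gradient DP s φ
    (DP : ℝ → (H → ℝ) → H → K)
    (hPsmooth : ∀ s : ℝ, 0 < s → ∀ φ, MemCm m φ → MemG1Gm G m (P s φ) (DP s φ))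
    -- (g) measurability of the G-gradient on (0,∞) × H
    (hDPmeas : ∀ φ, MemCm m φ → Measurable fun p : Ioi (0 : ℝ) × H => DP p.1 φ p.2)
    -- (h) gradient estimate with γ_G locally integrable and bounded near +∞
    (γG : ℝ → ℝ) (hγGpos : ∀ s : ℝ, 0 ≤ γG s)
    (hγGloc : ∀ T : ℝ, IntegrableOn γG (Icc 0 T))
    (hγGbdd : ∃ R Mb : ℝ, ∀ s : ℝ, R ≤ s → γG s ≤ Mb)
    (aG : ℝ)
    (hDPbd : ∀ s : ℝ, 0 < s → ∀ φ, MemCm m φ → ∀ x : H,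
      ‖DP s φ x‖ ≤ γG s * Real.exp (aG * s) * cmNorm m φ * (1 + ‖x‖ ^ m)) :
    -- conclusion: for λ large there is a unique mild solution in G^{1,G}_m(H)
    ∃ lam₀ : ℝ, ∀ lam : ℝ, lam₀ < lam →
      ∃ (v : H → ℝ) (Dv : H → K),
        (MemG1Gm G m v Dv ∧
          ∀ x : H, v x = ∫ s in Ici (0 : ℝ),
            Real.exp (-lam * s) * P s (fun y => F₀ y (v y) (Dv y)) x) ∧
        ∀ (v' : H → ℝ) (Dv' : H → K),
          (MemG1Gm G m v' Dv' ∧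
            ∀ x : H, v' x = ∫ s in Ici (0 : ℝ),
              Real.exp (-lam * s) * P s (fun y => F₀ y (v' y) (Dv' y)) x) →
          v' = v := by
  set κ : ℝ → ℝ := fun s => C * Real.exp (a * s) + γG s * Real.exp (aG * s)
  have hP : SmoothingFamily G m P DP κ := by
    refine ⟨fun s hs => hPadd s hs.le, hPsmooth, fun φ hφ x => ?_, fun φ hφ x => ?_,
      fun s => ?_, fun s hs φ hφ x => ?_, fun s hs φ hφ x => ?_⟩
    · exact ((aemeasurable_restrict_of_measurable_subtype measurableSet_Ici
        ((hPmeas φ hφ).comp (measurable_id.prodMk measurable_const))).mono_measure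
        (Measure.restrict_mono Ioi_subset_Ici_self le_rfl)).aestronglyMeasurable
    · exact (aemeasurable_restrict_of_measurable_subtype measurableSet_Ioi
        ((hDPmeas φ hφ).comp (measurable_id.prodMk measurable_const))).aestronglyMeasurable
    · exact add_nonneg (mul_nonneg hC.le (Real.exp_nonneg _))
        (mul_nonneg (hγGpos s) (Real.exp_nonneg _))
    · have hN := mul_nonneg (cmNorm_nonneg m φ) (one_add_rpow_norm_pos m x).le
      have hγ := mul_nonneg (mul_nonneg (hγGpos s) (Real.exp_nonneg (aG * s))) hN
      nlinarith [hPbd s hs.le φ hφ x]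
    · have hN := mul_nonneg (cmNorm_nonneg m φ) (one_add_rpow_norm_pos m x).le
      have hC' := mul_nonneg (mul_nonneg hC.le (Real.exp_nonneg (a * s))) hN
      nlinarith [hDPbd s hs φ hφ x]
  have hκ (lam : ℝ) (h : max a aG < lam) : LaplaceIntegrable κ lam :=
    (laplaceIntegrable_mul_exp (γ := fun _ => C) (fun _ => hC.le)
      (fun _ => continuous_const.integrableOn_Icc) ⟨0, C, fun _ _ => le_rfl⟩
      ((le_max_left _ _).trans_lt h)).add
    (laplaceIntegrable_mul_exp hγGpos hγGloc hγGbdd ((le_max_right _ _).trans_lt h))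
  obtain ⟨lam₀, hlam₀⟩ := eventually_atTop.1
    (((tendsto_laplace_atTop (hκ _ (lt_add_one _))).eventually
      (eventually_lt_nhds (by positivity : (0 : ℝ) < 1 / (2 * L)))).and
      (eventually_gt_atTop (max a aG)))
  refine ⟨lam₀, fun lam hlam => ?_⟩
  obtain ⟨hsmall, hlam⟩ := hlam₀ lam hlam.le
  refine hP.existsUnique_mildSolution hm hG hF₀cont hL.le hF₀lip hL'.le hF₀gr (hκ lam hlam) ?_
  rwa [lt_div_iff₀ (by positivity), mul_comm] at hsmall

/-- existence and uniqueness of the mild solution in `G^{1,G}_m(H)` of the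
semilinear elliptic equation, for `λ` large enough, under Assumption (G'), sequential
weak continuity, uniform Lipschitzianity and polynomial growth of the Hamiltonian `F₀`,
and the `G`-smoothing assumptions on the transition semigroup `(P_s)` on `C_m(H)`. -/
theorem stmt6 {H K : Type*}
    [NormedAddCommGroup H] [InnerProductSpace ℝ H] [CompleteSpace H]
    [TopologicalSpace.SeparableSpace H] [MeasurableSpace H] [BorelSpace H]
    [NormedAddCommGroup K] [InnerProductSpace ℝ K] [CompleteSpace K]
    [TopologicalSpace.SeparableSpace K] [MeasurableSpace K] [BorelSpace K]
    (m : ℝ) (hm : 0 ≤ m)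
    (G : GFamily K H) (hG : G.ContinuousPinv)
    (F₀ : H → ℝ → K → ℝ)
    -- (a) sequential continuity with the weak topology on K
    (hF₀cont : ∀ (xs : ℕ → H) (ys : ℕ → ℝ) (zs : ℕ → K) (x : H) (y : ℝ) (z : K),
      Tendsto xs atTop (nhds x) → Tendsto ys atTop (nhds y) →
      (∀ k : K, Tendsto (fun n => ⟪zs n, k⟫) atTop (nhds ⟪z, k⟫)) →
      Tendsto (fun n => F₀ (xs n) (ys n) (zs n)) atTop (nhds (F₀ x y z)))
    -- (b) uniform Lipschitz continuity in the last two variables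
    (L : ℝ) (hL : 0 < L)
    (hF₀lip : ∀ (x : H) (y₁ y₂ : ℝ) (z₁ z₂ : K),
      |F₀ x y₁ z₁ - F₀ x y₂ z₂| ≤ L * (|y₁ - y₂| + ‖z₁ - z₂‖))
    -- (c) polynomial growth
    (L' : ℝ) (hL' : 0 < L')
    (hF₀gr : ∀ (x : H) (y : ℝ) (z : K),
      |F₀ x y z| ≤ L' * (1 + ‖x‖ ^ m + |y| + ‖z‖))
    -- the semigroup P on C_m(H)
    (P : ℝ → (H → ℝ) → H → ℝ)
    (hPmem : ∀ s : ℝ, 0 ≤ s → ∀ φ, MemCm m φ → MemCm m (P s φ))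
    (hPadd : ∀ s : ℝ, 0 ≤ s → ∀ φ ψ, MemCm m φ → MemCm m ψ →
      ∀ x : H, P s (fun y => φ y + ψ y) x = P s φ x + P s ψ x)
    (hPsmul : ∀ s : ℝ, 0 ≤ s → ∀ (c : ℝ) φ, MemCm m φ →
      ∀ x : H, P s (fun y => c * φ y) x = c * P s φ x)
    (hP0 : ∀ φ, MemCm m φ → P 0 φ = φ)
    (hPsg : ∀ s t : ℝ, 0 ≤ s → 0 ≤ t → ∀ φ, MemCm m φ → P (t + s) φ = P t (P s φ))
    -- (d) joint measurability on [0,∞) × H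
    (hPmeas : ∀ φ, MemCm m φ → Measurable fun p : Ici (0 : ℝ) × H => P p.1 φ p.2)
    -- (e) growth estimate
    (C : ℝ) (hC : 0 < C) (a : ℝ)
    (hPbd : ∀ s : ℝ, 0 ≤ s → ∀ φ, MemCm m φ → ∀ x : H,
      |P s φ x| ≤ C * Real.exp (a * s) * cmNorm m φ * (1 + ‖x‖ ^ m))
    -- (f) G-smoothing: P_s maps C_m(H) into G^{1,G}_m(H), with G-gradient DP s φ
    (DP : ℝ → (H → ℝ) → H → K)
    (hPsmooth : ∀ s : ℝ, 0 < s → ∀ φ, MemCm m φ → MemG1Gm G m (P s φ) (DP s φ))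
    -- (g) measurability of the G-gradient on (0,∞) × H
    (hDPmeas : ∀ φ, MemCm m φ → Measurable fun p : Ioi (0 : ℝ) × H => DP p.1 φ p.2)
    -- (h) gradient estimate with γ_G locally integrable and bounded near +∞
    (γG : ℝ → ℝ) (hγGpos : ∀ s : ℝ, 0 ≤ γG s)
    (hγGloc : ∀ T : ℝ, IntegrableOn γG (Icc 0 T))
    (hγGbdd : ∃ R Mb : ℝ, ∀ s : ℝ, R ≤ s → γG s ≤ Mb)
    (aG : ℝ)
    (hDPbd : ∀ s : ℝ, 0 < s → ∀ φ, MemCm m φ → ∀ x : H,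
      ‖DP s φ x‖ ≤ γG s * Real.exp (aG * s) * cmNorm m φ * (1 + ‖x‖ ^ m)) :
    -- conclusion: for λ large there is a unique mild solution in G^{1,G}_m(H)
    ∃ lam₀ : ℝ, ∀ lam : ℝ, lam₀ < lam →
      ∃ (v : H → ℝ) (Dv : H → K),
        (MemG1Gm G m v Dv ∧
          ∀ x : H, v x = ∫ s in Ici (0 : ℝ),
            Real.exp (-lam * s) * P s (fun y => F₀ y (v y) (Dv y)) x) ∧
        ∀ (v' : H → ℝ) (Dv' : H → K),
          (MemG1Gm G m v' Dv' ∧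
            ∀ x : H, v' x = ∫ s in Ici (0 : ℝ),
              Real.exp (-lam * s) * P s (fun y => F₀ y (v' y) (Dv' y)) x) →
          v' = v :=
  stmt6_general m hm G hG F₀ hF₀cont L hL hF₀lip L' hL' hF₀gr P hPadd hPmeas C hC a hPbd DP hPsmooth
    hDPmeas γG hγGpos hγGloc hγGbdd aG hDPbd
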